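/- Let l : ℝ → ℝ be convex, increasing, bounded below, and let g : ℝ^d → ℝ. Let μ be a probability measure on ℝ^d with finite p-th moment (p > 1) which is non-degenerate in the sense that μ({x : ⟨a, x − x₀⟩ > 0}) > 0 for every a ≠ 0, and assume f(x,a) := l(g(x) + ⟨a, x − x₀⟩) satisfies f(x,a) ≤ c_r(1+|x|^p) for all |a| ≤ r. Then for every δ ≥ 0 the value V(δ) = inf_{a∈ℝ^d} sup_{ν: W_p(μ,ν)≤δ} ∫ l(g(x) + ⟨a, x−x₀⟩) ν(dx) is finite and the infimum over a is attained. -/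

import Mathlib

open Set MeasureTheory Filter Topology
open scoped ENNReal RealInnerProductSpace

/-- The `p`-Wasserstein distance on `ℝ^d` with respect to the Euclidean norm. -/
noncomputable def Wp {d : ℕ} (p : ℝ)
    (μ ν : Measure (EuclideanSpace ℝ (Fin d))) : ℝ≥0∞ :=
  ⨅ π ∈ {π : Measure (EuclideanSpace ℝ (Fin d) × EuclideanSpace ℝ (Fin d)) |
      π.map Prod.fst = μ ∧ π.map Prod.snd = ν},
    (∫⁻ z, ENNReal.ofReal (‖z.1 - z.2‖ ^ p) ∂π) ^ (1 / p)

/-! The worst-case risk `F a = sup_{ν ∈ B_δ(μ)} ∫ l(g x + ⟪a, x - x₀⟫) dν` is finite because every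
`ν` in a Wasserstein ball has `p`-th moment bounded by `2^(p-1) (∫ ‖x‖^p dμ + (δ + 1)^p)`, and it is
a supremum of convex functions of `a`, hence convex and continuous. If `l` is constant every `a`
is optimal. Otherwise `l → ∞`, and `F a ≥ ∫ l(g x + ⟪a, x - x₀⟫) dμ → ∞` as `‖a‖ → ∞`: if the
directions of `a` approach `ã`, non-degeneracy yields a set of positive `μ`-measure on which `g` is
bounded below and `⟪a, x - x₀⟫` grows linearly in `‖a‖`. A continuous coercive function attains
its minimum. -/

theorem ofReal_rpow_norm_le {F : Type*} {p : ℝ} [SeminormedAddCommGroup F] (hp : 1 ≤ p) (x y : F) :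
    ENNReal.ofReal (‖y‖ ^ p) ≤
      2 ^ (p - 1) * (ENNReal.ofReal (‖x‖ ^ p) + ENNReal.ofReal (‖x - y‖ ^ p)) := by
  have hp0 : 0 ≤ p := zero_le_one.trans hp
  simp only [← ENNReal.ofReal_rpow_of_nonneg (norm_nonneg _) hp0]
  calc ENNReal.ofReal ‖y‖ ^ p ≤ (ENNReal.ofReal ‖x‖ + ENNReal.ofReal ‖x - y‖) ^ p := by
        gcongr
        rw [← ENNReal.ofReal_add (norm_nonneg _) (norm_nonneg _)]
        exact ENNReal.ofReal_le_ofReal (by simpa using norm_sub_le x (x - y))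
    _ ≤ _ := ENNReal.rpow_add_le_mul_rpow_add_rpow _ _ hp

section Wasserstein

variable {d : ℕ} {p : ℝ}

theorem Wp_self (hp : 0 < p) (μ : Measure (EuclideanSpace ℝ (Fin d))) : Wp p μ μ = 0 := by
  have hdiag : Measurable fun x : EuclideanSpace ℝ (Fin d) => (x, x) :=
    measurable_id.prodMk measurable_id
  refine le_antisymm (iInf₂_le_of_le (μ.map fun x => (x, x)) ⟨?_, ?_⟩ ?_) bot_le
  · rw [Measure.map_map measurable_fst hdiag]; exact Measure.map_id
  · rw [Measure.map_map measurable_snd hdiag]; exact Measure.map_id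
  · rw [lintegral_map (by fun_prop) hdiag]
    simp [Real.zero_rpow hp.ne', hp]

theorem lintegral_rpow_norm_le_of_Wp_lt (hp : 1 ≤ p) {μ ν : Measure (EuclideanSpace ℝ (Fin d))}
    {R : ℝ≥0∞} (h : Wp p μ ν < R) :
    ∫⁻ x, ENNReal.ofReal (‖x‖ ^ p) ∂ν ≤
      2 ^ (p - 1) * (∫⁻ x, ENNReal.ofReal (‖x‖ ^ p) ∂μ + R ^ p) := by
  have hp0 : 0 < p := zero_lt_one.trans_le hp
  simp only [Wp, iInf_lt_iff] at h
  obtain ⟨π, ⟨rfl, rfl⟩, hπ⟩ := h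
  have hcost : ∫⁻ z, ENNReal.ofReal (‖z.1 - z.2‖ ^ p) ∂π ≤ R ^ p := by
    simpa [← ENNReal.rpow_mul, hp0.ne'] using ENNReal.rpow_le_rpow hπ.le hp0.le
  rw [lintegral_map (by fun_prop) measurable_snd, lintegral_map (by fun_prop) measurable_fst]
  calc ∫⁻ z, ENNReal.ofReal (‖z.2‖ ^ p) ∂π
      ≤ ∫⁻ z, 2 ^ (p - 1) * (ENNReal.ofReal (‖z.1‖ ^ p) + ENNReal.ofReal (‖z.1 - z.2‖ ^ p)) ∂π :=
        lintegral_mono fun z => ofReal_rpow_norm_le hp z.1 z.2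
    _ = 2 ^ (p - 1) * (∫⁻ z, ENNReal.ofReal (‖z.1‖ ^ p) ∂π +
          ∫⁻ z, ENNReal.ofReal (‖z.1 - z.2‖ ^ p) ∂π) := by
        rw [lintegral_const_mul _ (by fun_prop), lintegral_add_left (by fun_prop)]
    _ ≤ _ := by gcongr

def wassersteinBall (p : ℝ) (μ : Measure (EuclideanSpace ℝ (Fin d))) (δ : ℝ) :
    Set (Measure (EuclideanSpace ℝ (Fin d))) :=
  {ν | IsProbabilityMeasure ν ∧ Wp p μ ν ≤ ENNReal.ofReal δ}

theorem setOf_integral_eq_image_wassersteinBall (μ : Measure (EuclideanSpace ℝ (Fin d))) (δ : ℝ)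
    (f : EuclideanSpace ℝ (Fin d) → ℝ) :
    {r : ℝ | ∃ ν : Measure (EuclideanSpace ℝ (Fin d)), IsProbabilityMeasure ν ∧
        Wp p μ ν ≤ ENNReal.ofReal δ ∧ r = ∫ x, f x ∂ν} =
      (fun ν => ∫ x, f x ∂ν) '' wassersteinBall p μ δ := by
  ext r
  simp [wassersteinBall, and_assoc, eq_comm]

theorem mem_wassersteinBall_self (hp : 0 < p) (μ : Measure (EuclideanSpace ℝ (Fin d)))
    [IsProbabilityMeasure μ] (δ : ℝ) : μ ∈ wassersteinBall p μ δ :=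
  ⟨inferInstance, by simp [Wp_self hp]⟩

theorem exists_integral_rpow_norm_le_of_mem_wassersteinBall (hp : 1 ≤ p)
    {μ : Measure (EuclideanSpace ℝ (Fin d))} (hmom : Integrable (fun x => ‖x‖ ^ p) μ) (δ : ℝ) :
    ∃ K : ℝ, ∀ ν ∈ wassersteinBall p μ δ,
      Integrable (fun x => ‖x‖ ^ p) ν ∧ ∫ x, ‖x‖ ^ p ∂ν ≤ K := by
  have hp0 : 0 ≤ p := zero_le_one.trans hp
  have hnonneg (ν : Measure (EuclideanSpace ℝ (Fin d))) : 0 ≤ᵐ[ν] fun x => ‖x‖ ^ p :=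
    .of_forall fun x => by positivity
  set K := 2 ^ (p - 1) * (∫⁻ x, ENNReal.ofReal (‖x‖ ^ p) ∂μ + (ENNReal.ofReal δ + 1) ^ p)
  have hK : K ≠ ⊤ := by
    have hμ := (hasFiniteIntegral_iff_ofReal (hnonneg μ)).1 hmom.2
    exact ENNReal.mul_ne_top (by simp)
      (ENNReal.add_ne_top.2 ⟨hμ.ne, ENNReal.rpow_ne_top_of_nonneg hp0 (by simp)⟩)
  refine ⟨K.toReal, fun ν ⟨_, hν⟩ => ?_⟩
  -- the infimum defining `Wp` need not be attained, hence the slack `+ 1`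
  have hνK : ∫⁻ x, ENNReal.ofReal (‖x‖ ^ p) ∂ν ≤ K := lintegral_rpow_norm_le_of_Wp_lt hp <|
    hν.trans_lt (ENNReal.lt_add_right ENNReal.ofReal_ne_top one_ne_zero)
  have hmeas : AEStronglyMeasurable (fun x : EuclideanSpace ℝ (Fin d) => ‖x‖ ^ p) ν := by
    fun_prop
  refine ⟨⟨hmeas, (hasFiniteIntegral_iff_ofReal (hnonneg ν)).2 (hνK.trans_lt hK.lt_top)⟩, ?_⟩
  rw [integral_eq_lintegral_of_nonneg_ae (hnonneg ν) hmeas]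
  exact ENNReal.toReal_mono hK hνK

variable {μ : Measure (EuclideanSpace ℝ (Fin d))} {f : EuclideanSpace ℝ (Fin d) → ℝ} {m c : ℝ}

theorem integrable_of_le_rpow_of_mem_wassersteinBall (hp : 1 ≤ p)
    (hmom : Integrable (fun x => ‖x‖ ^ p) μ) {δ : ℝ} (hf : Measurable f) (hm : ∀ x, m ≤ f x)
    (hc : ∀ x, f x ≤ c * (1 + ‖x‖ ^ p)) {ν : Measure (EuclideanSpace ℝ (Fin d))}
    (hν : ν ∈ wassersteinBall p μ δ) : Integrable f ν := by
  have : IsProbabilityMeasure ν := hν.1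
  obtain ⟨K, hK⟩ := exists_integral_rpow_norm_le_of_mem_wassersteinBall hp hmom δ
  exact integrable_of_le_of_le hf.aestronglyMeasurable (.of_forall hm) (.of_forall hc)
    (integrable_const m) (((integrable_const 1).add (hK ν hν).1).const_mul c)

theorem bddAbove_integral_of_le_rpow (hp : 1 ≤ p) (hmom : Integrable (fun x => ‖x‖ ^ p) μ)
    (δ : ℝ) (hf : Measurable f) (hm : ∀ x, m ≤ f x) (hc0 : 0 ≤ c)
    (hc : ∀ x, f x ≤ c * (1 + ‖x‖ ^ p)) :
    BddAbove ((fun ν => ∫ x, f x ∂ν) '' wassersteinBall p μ δ) := by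
  obtain ⟨K, hK⟩ := exists_integral_rpow_norm_le_of_mem_wassersteinBall hp hmom δ
  refine ⟨c * (1 + K), ?_⟩
  rintro _ ⟨ν, hν, rfl⟩
  have : IsProbabilityMeasure ν := hν.1
  have hmomν := (hK ν hν).1
  calc ∫ x, f x ∂ν ≤ ∫ x, c * (1 + ‖x‖ ^ p) ∂ν :=
        integral_mono (integrable_of_le_rpow_of_mem_wassersteinBall hp hmom hf hm hc hν)
          (((integrable_const 1).add hmomν).const_mul c) hc
    _ = c * (1 + ∫ x, ‖x‖ ^ p ∂ν) := by
        rw [integral_const_mul, integral_add (integrable_const 1) hmomν]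
        simp
    _ ≤ c * (1 + K) := by gcongr; exact (hK ν hν).2

end Wasserstein

section Convexity

variable {X V : Type*} [MeasurableSpace X] [AddCommGroup V] [Module ℝ V]

theorem convexOn_integral {ν : Measure X} {f : V → X → ℝ}
    (hconv : ∀ x, ConvexOn ℝ univ (f · x)) (hint : ∀ a, Integrable (f a) ν) :
    ConvexOn ℝ univ fun a => ∫ x, f a x ∂ν := by
  refine ⟨convex_univ, fun a _ b _ s t hs ht hst => ?_⟩
  calc ∫ x, f (s • a + t • b) x ∂ν ≤ ∫ x, s * f a x + t * f b x ∂ν :=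
        integral_mono (hint _) (((hint a).const_mul s).add ((hint b).const_mul t))
          fun x => (hconv x).2 trivial trivial hs ht hst
    _ = s * ∫ x, f a x ∂ν + t * ∫ x, f b x ∂ν := by
        rw [integral_add ((hint a).const_mul s) ((hint b).const_mul t), integral_const_mul,
          integral_const_mul]

theorem convexOn_sSup_image {ι : Type*} {S : Set ι} (hS : S.Nonempty) {φ : ι → V → ℝ}
    (hconv : ∀ i ∈ S, ConvexOn ℝ univ (φ i)) (hbdd : ∀ a, BddAbove ((φ · a) '' S)) :
    ConvexOn ℝ univ fun a => sSup ((φ · a) '' S) := by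
  refine ⟨convex_univ, fun a _ b _ s t hs ht hst => csSup_le (hS.image _) ?_⟩
  rintro _ ⟨i, hi, rfl⟩
  calc φ i (s • a + t • b) ≤ s • φ i a + t • φ i b := (hconv i hi).2 trivial trivial hs ht hst
    _ ≤ s • sSup ((φ · a) '' S) + t • sSup ((φ · b) '' S) := by
        gcongr
        exacts [le_csSup (hbdd a) ⟨i, hi, rfl⟩, le_csSup (hbdd b) ⟨i, hi, rfl⟩]

theorem ConvexOn.comp_add_inner {E : Type*} [NormedAddCommGroup E] [InnerProductSpace ℝ E]
    {l : ℝ → ℝ} (hl : ConvexOn ℝ univ l) (c : ℝ) (y : E) :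
    ConvexOn ℝ univ fun a : E => l (c + ⟪a, y⟫) := by
  refine ⟨convex_univ, fun a _ b _ s t hs ht hst => ?_⟩
  have harg : c + ⟪s • a + t • b, y⟫ = s • (c + ⟪a, y⟫) + t • (c + ⟪b, y⟫) := by
    simp only [inner_add_left, real_inner_smul_left, smul_eq_mul]
    linear_combination c * hst.symm
  dsimp only
  rw [harg]
  exact hl.2 trivial trivial hs ht hst

end Convexity

theorem ConvexOn.tendsto_atTop_of_lt {l : ℝ → ℝ} (hl : ConvexOn ℝ univ l) {u v : ℝ} (huv : u < v)
    (hluv : l u < l v) : Tendsto l atTop atTop := by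
  set k := (l v - l u) / (v - u)
  have hk : 0 < k := div_pos (sub_pos.2 hluv) (sub_pos.2 huv)
  refine tendsto_atTop_mono' _ ((eventually_gt_atTop v).mono fun w hvw => ?_)
    (tendsto_atTop_add_const_right _ (l v - k * v) (tendsto_id.const_mul_atTop hk))
  have hslope : k ≤ (l w - l v) / (w - v) := hl.slope_mono_adjacent trivial trivial huv hvw
  rw [le_div_iff₀ (sub_pos.2 hvw)] at hslope
  simp only [id]
  linarith

theorem ConvexOn.tendsto_atTop_or_eq_const {l : ℝ → ℝ} (hl : ConvexOn ℝ univ l)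
    (hmono : Monotone l) : Tendsto l atTop atTop ∨ ∀ t, l t = l 0 := by
  by_cases h : ∃ u v, u < v ∧ l u < l v
  · obtain ⟨u, v, huv, hluv⟩ := h
    exact .inl (hl.tendsto_atTop_of_lt huv hluv)
  · push Not at h
    refine .inr fun t => ?_
    rcases lt_trichotomy t 0 with ht | rfl | ht
    exacts [le_antisymm (hmono ht.le) (h t 0 ht), rfl, le_antisymm (h 0 t ht) (hmono ht.le)]

theorem add_measureReal_mul_sub_le_integral {X : Type*} [MeasurableSpace X] {μ : Measure X}
    [IsProbabilityMeasure μ] {f : X → ℝ} (hf : Integrable f μ) {B : Set X} (hB : MeasurableSet B)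
    {m L : ℝ} (hm : ∀ x, m ≤ f x) (hL : ∀ x ∈ B, L ≤ f x) :
    m + μ.real B * (L - m) ≤ ∫ x, f x ∂μ := by
  have hB' := setIntegral_ge_of_const_le_real hB (measure_ne_top μ B) hL hf.integrableOn
  have hBc := setIntegral_ge_of_const_le_real hB.compl (measure_ne_top μ Bᶜ) (fun x _ => hm x)
    hf.integrableOn
  rw [probReal_compl_eq_one_sub hB] at hBc
  rw [← integral_add_compl hB hf]
  linarith

section Coercivity

variable {E : Type*} [NormedAddCommGroup E] [InnerProductSpace ℝ E]

theorem norm_mul_half_le_inner {e b y : E} {ε R : ℝ} (hε : ε ≤ ⟪e, y⟫) (hR : ‖y‖ ≤ R)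
    (hb : ‖‖b‖⁻¹ • b - e‖ * R ≤ ε / 2) : ‖b‖ * (ε / 2) ≤ ⟪b, y⟫ := by
  rcases eq_or_ne b 0 with rfl | hb0
  · simp
  have hdir : ε / 2 ≤ ⟪‖b‖⁻¹ • b, y⟫ := by
    have hcs := real_inner_le_norm (e - ‖b‖⁻¹ • b) y
    rw [inner_sub_left, norm_sub_rev] at hcs
    nlinarith [mul_le_mul_of_nonneg_left hR (norm_nonneg (‖b‖⁻¹ • b - e))]
  calc ‖b‖ * (ε / 2) ≤ ‖b‖ * ⟪‖b‖⁻¹ • b, y⟫ := by gcongr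
    _ = ⟪b, y⟫ := by
        rw [real_inner_smul_left, ← mul_assoc, mul_inv_cancel₀ (norm_ne_zero_iff.2 hb0), one_mul]

variable [MeasurableSpace E]

theorem exists_measure_inner_ge_ne_zero (μ : Measure E) (h : E → ℝ) {e x₀ : E}
    (he : μ {x | 0 < ⟪e, x - x₀⟫} ≠ 0) :
    ∃ ε > 0, ∃ R, μ {x | ε ≤ ⟪e, x - x₀⟫ ∧ ‖x - x₀‖ ≤ R ∧ -R ≤ h x} ≠ 0 := by
  by_contra! H
  refine he (measure_mono_null (fun x (hx : 0 < ⟪e, x - x₀⟫) => ?_)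
    (measure_iUnion_null fun n : ℕ => H (1 / (n + 1)) (by positivity) n))
  obtain ⟨n, hn⟩ := exists_nat_ge (max (1 / ⟪e, x - x₀⟫) (max ‖x - x₀‖ (-h x)))
  simp only [max_le_iff] at hn
  refine mem_iUnion.2 ⟨n, ?_, hn.2.1, by linarith [hn.2.2]⟩
  rw [div_le_iff₀ (by positivity)]
  rw [div_le_iff₀ hx] at hn
  nlinarith [hn.1]

variable [FiniteDimensional ℝ E] [BorelSpace E]

theorem tendsto_integral_comp_add_inner_cocompact (μ : Measure E) [IsProbabilityMeasure μ]
    {φ : ℝ → ℝ} (hφ : Monotone φ) (hφ_top : Tendsto φ atTop atTop) {m : ℝ} (hm : ∀ t, m ≤ φ t)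
    {h : E → ℝ} (hh : Measurable h) (x₀ : E)
    (hint : ∀ a, Integrable (fun x => φ (h x + ⟪a, x - x₀⟫)) μ)
    (hnd : ∀ a, a ≠ 0 → μ {x | 0 < ⟪a, x - x₀⟫} ≠ 0) :
    Tendsto (fun a => ∫ x, φ (h x + ⟪a, x - x₀⟫) ∂μ) (cocompact E) atTop := by
  -- `cocompact E = comap norm atTop` is countably generated, so sequences suffice
  rw [← Metric.cobounded_eq_cocompact, ← comap_norm_atTop]
  refine tendsto_of_seq_tendsto fun a ha => tendsto_of_subseq_tendsto fun ns hns => ?_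
  set dir : ℕ → E := fun n => ‖a (ns n)‖⁻¹ • a (ns n)
  obtain ⟨e, -, ms, hms, hdir⟩ := (isCompact_closedBall (0 : E) 1).tendsto_subseq (x := dir)
    fun n => by
      rw [mem_closedBall_zero_iff, norm_smul, norm_inv, norm_norm]
      exact inv_mul_le_one_of_le₀ le_rfl (norm_nonneg _)
  have hnorm : Tendsto (fun k => ‖a (ns (ms k))‖) atTop atTop :=
    (tendsto_comap_iff.1 ha).comp (hns.comp hms.tendsto_atTop)
  have he : e ≠ 0 := by
    have hunit : ∀ᶠ k in atTop, ‖dir (ms k)‖ = 1 :=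
      (hnorm.eventually_gt_atTop 0).mono fun k hk => norm_smul_inv_norm (𝕜 := ℝ) (norm_pos_iff.1 hk)
    have := tendsto_nhds_unique hdir.norm (tendsto_const_nhds.congr' (hunit.mono fun _ h => h.symm))
    rintro rfl
    simp at this
  obtain ⟨ε, hε, R, hB⟩ := exists_measure_inner_ge_ne_zero μ h (hnd e he)
  set B := {x | ε ≤ ⟪e, x - x₀⟫ ∧ ‖x - x₀‖ ≤ R ∧ -R ≤ h x}
  have hBmeas : MeasurableSet B := by
    change MeasurableSet ({x | ε ≤ ⟪e, x - x₀⟫} ∩ ({x | ‖x - x₀‖ ≤ R} ∩ {x | -R ≤ h x}))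
    exact (measurableSet_le measurable_const (by fun_prop)).inter
      ((measurableSet_le (by fun_prop) measurable_const).inter
        (measurableSet_le measurable_const hh))
  have hβ : 0 < μ.real B := ENNReal.toReal_pos hB (measure_ne_top μ B)
  have hclose : ∀ᶠ k in atTop, ‖dir (ms k) - e‖ * R ≤ ε / 2 := by
    have : Tendsto (fun k => ‖dir (ms k) - e‖ * R) atTop (𝓝 0) := by
      simpa using (hdir.sub_const e).norm.mul_const R
    exact this.eventually (ge_mem_nhds (half_pos hε))
  have hlower : Tendsto (fun k => m + μ.real B * (φ (-R + ‖a (ns (ms k))‖ * (ε / 2)) - m))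
      atTop atTop := by
    refine tendsto_atTop_add_const_left _ m (Tendsto.const_mul_atTop hβ ?_)
    simpa [sub_eq_add_neg] using tendsto_atTop_add_const_right _ (-m) <|
      hφ_top.comp (tendsto_atTop_add_const_left _ (-R) (hnorm.atTop_mul_const (half_pos hε)))
  refine ⟨ms, tendsto_atTop_mono' _ (hclose.mono fun k hk => ?_) hlower⟩
  refine add_measureReal_mul_sub_le_integral (hint _) hBmeas (fun x => hm _) fun x hx => hφ ?_
  linarith [norm_mul_half_le_inner hx.1 hx.2.1 hk, hx.2.2]

end Coercivity

theorem stmt11_general {d : ℕ} (p : ℝ) (hp : 1 < p)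
    (μ : Measure (EuclideanSpace ℝ (Fin d))) [IsProbabilityMeasure μ]
    (hmom : Integrable (fun x => ‖x‖ ^ p) μ)
    (l : ℝ → ℝ) (hconv : ConvexOn ℝ Set.univ l) (hmono : Monotone l)
    (hbb : BddBelow (Set.range l))
    (g : EuclideanSpace ℝ (Fin d) → ℝ) (hg : Measurable g)
    (x₀ : EuclideanSpace ℝ (Fin d))
    (hgrowth : ∀ r : ℝ, 0 < r → ∃ c : ℝ, 0 < c ∧ ∀ a : EuclideanSpace ℝ (Fin d),
      ‖a‖ ≤ r → ∀ x, l (g x + ⟪a, x - x₀⟫) ≤ c * (1 + ‖x‖ ^ p))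
    (hnd : ∀ a : EuclideanSpace ℝ (Fin d), a ≠ 0 → μ {x | 0 < ⟪a, x - x₀⟫} ≠ 0)
    (δ : ℝ) :
    (∀ a : EuclideanSpace ℝ (Fin d),
      BddAbove {r : ℝ | ∃ ν : Measure (EuclideanSpace ℝ (Fin d)), IsProbabilityMeasure ν ∧
        Wp p μ ν ≤ ENNReal.ofReal δ ∧ r = ∫ x, l (g x + ⟪a, x - x₀⟫) ∂ν}) ∧
    ∃ astar : EuclideanSpace ℝ (Fin d), ∀ a : EuclideanSpace ℝ (Fin d),
      sSup {r : ℝ | ∃ ν : Measure (EuclideanSpace ℝ (Fin d)), IsProbabilityMeasure ν ∧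
        Wp p μ ν ≤ ENNReal.ofReal δ ∧ r = ∫ x, l (g x + ⟪astar, x - x₀⟫) ∂ν}
      ≤ sSup {r : ℝ | ∃ ν : Measure (EuclideanSpace ℝ (Fin d)), IsProbabilityMeasure ν ∧
        Wp p μ ν ≤ ENNReal.ofReal δ ∧ r = ∫ x, l (g x + ⟪a, x - x₀⟫) ∂ν} := by
  simp only [setOf_integral_eq_image_wassersteinBall]
  obtain ⟨m, hm⟩ := hbb
  have hmeas (a : EuclideanSpace ℝ (Fin d)) : Measurable fun x => l (g x + ⟪a, x - x₀⟫) :=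
    (continuousOn_univ.1 (hconv.continuousOn isOpen_univ)).measurable.comp (hg.add (by fun_prop))
  have hgrowth' (a : EuclideanSpace ℝ (Fin d)) :
      ∃ c, 0 ≤ c ∧ ∀ x, l (g x + ⟪a, x - x₀⟫) ≤ c * (1 + ‖x‖ ^ p) :=
    let ⟨c, hc, hca⟩ := hgrowth (‖a‖ + 1) (by positivity)
    ⟨c, hc.le, hca a (lt_add_one _).le⟩
  have hint (a) (ν) (hν : ν ∈ wassersteinBall p μ δ) :
      Integrable (fun x => l (g x + ⟪a, x - x₀⟫)) ν :=
    let ⟨_, _, hca⟩ := hgrowth' a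
    integrable_of_le_rpow_of_mem_wassersteinBall hp.le hmom (hmeas a) (fun _ => hm ⟨_, rfl⟩) hca hν
  have hbdd (a) : BddAbove ((fun ν => ∫ x, l (g x + ⟪a, x - x₀⟫) ∂ν) '' wassersteinBall p μ δ) :=
    let ⟨_, hc, hca⟩ := hgrowth' a
    bddAbove_integral_of_le_rpow hp.le hmom δ (hmeas a) (fun _ => hm ⟨_, rfl⟩) hc hca
  have hμ := mem_wassersteinBall_self (zero_lt_one.trans hp) μ δ
  refine ⟨hbdd, ?_⟩
  rcases hconv.tendsto_atTop_or_eq_const hmono with htop | hconst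
  · have hconvF := convexOn_sSup_image ⟨μ, hμ⟩
      (φ := fun ν a => ∫ x, l (g x + ⟪a, x - x₀⟫) ∂ν)
      (fun ν hν => convexOn_integral (fun x => hconv.comp_add_inner _ _) (hint · ν hν)) hbdd
    have hcoer := tendsto_integral_comp_add_inner_cocompact μ hmono htop (fun _ => hm ⟨_, rfl⟩) hg
      x₀ (hint · μ hμ) hnd
    exact (continuousOn_univ.1 (hconvF.continuousOn isOpen_univ)).exists_forall_le <|
      tendsto_atTop_mono (fun a => le_csSup (hbdd a) ⟨μ, hμ, rfl⟩) hcoer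
  · exact ⟨0, fun a => by simp only [hconst, le_refl]⟩

/-- Existence of an optimizer for the robust expected-loss problem
`V(δ) = inf_a sup_{ν ∈ B_δ(μ)} ∫ l(g(x) + ⟨a, x − x₀⟩) dν(x)`:
the value is finite (the inner suprema are bounded above), and the infimum over `a`
is attained, under convexity, monotonicity, lower boundedness of `l`, a growth
bound, and non-degeneracy of `μ`. -/
theorem stmt11 {d : ℕ} (p : ℝ) (hp : 1 < p)
    (μ : Measure (EuclideanSpace ℝ (Fin d))) [IsProbabilityMeasure μ]
    (hmom : Integrable (fun x => ‖x‖ ^ p) μ)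
    (l : ℝ → ℝ) (hconv : ConvexOn ℝ Set.univ l) (hmono : Monotone l)
    (hbb : BddBelow (Set.range l))
    (g : EuclideanSpace ℝ (Fin d) → ℝ) (hg : Measurable g)
    (x₀ : EuclideanSpace ℝ (Fin d))
    (hgrowth : ∀ r : ℝ, 0 < r → ∃ c : ℝ, 0 < c ∧ ∀ a : EuclideanSpace ℝ (Fin d),
      ‖a‖ ≤ r → ∀ x, l (g x + ⟪a, x - x₀⟫) ≤ c * (1 + ‖x‖ ^ p))
    (hnd : ∀ a : EuclideanSpace ℝ (Fin d), a ≠ 0 → μ {x | 0 < ⟪a, x - x₀⟫} ≠ 0)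
    (δ : ℝ) (hδ : 0 ≤ δ) :
    (∀ a : EuclideanSpace ℝ (Fin d),
      BddAbove {r : ℝ | ∃ ν : Measure (EuclideanSpace ℝ (Fin d)), IsProbabilityMeasure ν ∧
        Wp p μ ν ≤ ENNReal.ofReal δ ∧ r = ∫ x, l (g x + ⟪a, x - x₀⟫) ∂ν}) ∧
    ∃ astar : EuclideanSpace ℝ (Fin d), ∀ a : EuclideanSpace ℝ (Fin d),
      sSup {r : ℝ | ∃ ν : Measure (EuclideanSpace ℝ (Fin d)), IsProbabilityMeasure ν ∧
        Wp p μ ν ≤ ENNReal.ofReal δ ∧ r = ∫ x, l (g x + ⟪astar, x - x₀⟫) ∂ν}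
      ≤ sSup {r : ℝ | ∃ ν : Measure (EuclideanSpace ℝ (Fin d)), IsProbabilityMeasure ν ∧
        Wp p μ ν ≤ ENNReal.ofReal δ ∧ r = ∫ x, l (g x + ⟪a, x - x₀⟫) ∂ν} :=
  stmt11_general p hp μ hmom l hconv hmono hbb g hg x₀ hgrowth hnd δ
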